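/- arXiv:1709.09985 — 2 statements merged into one kernel-verified Lean document; each statement's English description precedes it below -/
import Mathlib

section
/- Let G be a finite simple graph, R a graph possibly with loops, (V_u)_{u∈V(R)} a partition of V(G), and let P_u denote the u-perfect set. Then for every vertex v∈V_u and every vertex w distinct from v, the vertex w lies in the symmetric difference N_{G^R}(v) △ P_u if and only if w is a neighbor of v in G. Consequently, |N_{G^R}(v) △ P_u| equals deg_G(v) if u has no loop, and equals deg_G(v) + 1 if u has a loop. -/
/-- The graph `G^R`: given a graph `R` possibly with loops on a node type `ι`
(presented as a relation) and a partition of `V(G)` indexed by the nodes of `R`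
(presented as `p : V → ι`, the part `V_u` being `p ⁻¹' {u}`), two distinct
vertices are adjacent in `G^R` iff exactly one of the following holds:
they are adjacent in `G`, or their parts are adjacent in `R`. -/
def SimpleGraph.patternApply {V ι : Type*} (G : SimpleGraph V) (R : ι → ι → Prop)
    (p : V → ι) : SimpleGraph V where
  Adj v w := v ≠ w ∧ Xor' (G.Adj v w) (R (p v) (p w) ∨ R (p w) (p v))
  symm := by
    constructor
    rintro v w ⟨h1, h2⟩
    refine ⟨h1.symm, ?_⟩
    rwa [G.adj_comm, or_comm] at h2
  loopless := ⟨fun v h => h.1 rfl⟩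

/-- A pattern: a graph possibly with loops (a symmetric relation on nodes) with
no pair of adjacent twins both having loops and no pair of non-adjacent twins
neither of which has a loop. -/
def IsPattern {ι : Type*} (R : ι → ι → Prop) : Prop :=
  Symmetric R ∧ ∀ u₁ u₂ : ι, u₁ ≠ u₂ →
    (∀ w : ι, w ≠ u₁ → w ≠ u₂ → (R u₁ w ↔ R u₂ w)) →
    ¬((R u₁ u₂ ∧ R u₁ u₁ ∧ R u₂ u₂) ∨ (¬R u₁ u₂ ∧ ¬R u₁ u₁ ∧ ¬R u₂ u₂))

/-- `G` is `d`-degenerate: the vertices can be linearly ordered (via an injection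
into `ℕ`) so that every vertex has at most `d` neighbors preceding it. -/
def SimpleGraph.Degenerate {V : Type*} (G : SimpleGraph V) (d : ℕ) : Prop :=
  ∃ f : V → ℕ, Function.Injective f ∧ ∀ v : V, {w : V | G.Adj v w ∧ f w < f v}.ncard ≤ d

/-- Two sets of vertices are `k`-similar if their symmetric difference has at
most `k` elements. -/
def KSimilar {V : Type*} (k : ℕ) (X Y : Set V) : Prop := (symmDiff X Y).ncard ≤ k

/-- The `k`-similarity graph of `H`: two distinct vertices are adjacent iff
their neighborhoods are `k`-similar. -/
def simGraph {V : Type*} (H : SimpleGraph V) (k : ℕ) : SimpleGraph V where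
  Adj v w := v ≠ w ∧ KSimilar k (H.neighborSet v) (H.neighborSet w)
  symm := by
    constructor
    rintro v w ⟨h1, h2⟩
    exact ⟨h1.symm, by rwa [KSimilar, symmDiff_comm]⟩
  loopless := ⟨fun v h => h.1 rfl⟩

/-- The `u`-perfect set: the union of the parts `V_{u'}` over all neighbors
`u'` of `u` in `R`. -/
def perfectSet {V ι : Type*} (R : ι → ι → Prop) (p : V → ι) (u : ι) : Set V :=
  {v : V | R u (p v)}

/-- A vertex `v` is `(u,k)`-perfect if its neighborhood in `G^R` is `k`-similar
to the `u`-perfect set. -/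
def PerfectVtx {V ι : Type*} (G : SimpleGraph V) (R : ι → ι → Prop) (p : V → ι)
    (u : ι) (k : ℕ) (v : V) : Prop :=
  KSimilar k ((G.patternApply R p).neighborSet v) (perfectSet R p u)

/-- Complementing a graph on a subset `S` of its vertices: adjacency between
distinct vertices of `S` is flipped, all other adjacencies are unchanged. -/
def complementOn {V : Type*} (G : SimpleGraph V) (S : Set V) : SimpleGraph V where
  Adj v w := v ≠ w ∧ Xor' (G.Adj v w) (v ∈ S ∧ w ∈ S)
  symm := by
    constructor
    rintro v w ⟨h1, h2⟩
    refine ⟨h1.symm, ?_⟩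
    rwa [G.adj_comm, and_comm] at h2
  loopless := ⟨fun v h => h.1 rfl⟩

/-! Since `R` is symmetric, for `w ≠ v` adjacency in `G^R` is `G.Adj v w` xor `R u (p w)`, and
`R u (p w)` is exactly membership in `P_u`; so taking the symmetric difference with `P_u`
cancels it and leaves `N_G(v)`. The vertex `v` is never in `N_{G^R}(v)`, and it lies in `P_u`
exactly when `u` has a loop, which accounts for the extra `+ 1`. -/

namespace SimpleGraph

variable {V ι : Type*} (G : SimpleGraph V) {R : ι → ι → Prop} (p : V → ι)

theorem patternApply_adj_of_symmetric (hR : Symmetric R) {v w : V} :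
    (G.patternApply R p).Adj v w ↔ v ≠ w ∧ Xor' (G.Adj v w) (R (p v) (p w)) := by
  simp only [patternApply, or_iff_left_of_imp (@hR (p w) (p v))]

theorem mem_symmDiff_neighborSet_perfectSet (hR : Symmetric R) {u : ι} {v : V} (hv : p v = u)
    (w : V) :
    w ∈ symmDiff ((G.patternApply R p).neighborSet v) (perfectSet R p u) ↔
      G.Adj v w ∨ (w = v ∧ R u u) := by
  simp only [Set.mem_symmDiff, mem_neighborSet, G.patternApply_adj_of_symmetric p hR, hv,
    perfectSet, Set.mem_ofPred_eq]
  obtain rfl | hw := eq_or_ne w v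
  · simp [hv]
  · simp only [ne_eq, hw.symm, hw, not_false_eq_true, true_and, false_and, or_false]
    by_cases G.Adj v w <;> by_cases R u (p w) <;> simp_all [Xor']

end SimpleGraph

/-- for `v ∈ V_u`, a vertex `w ≠ v` lies in `N_{G^R}(v) △ P_u` iff `w` is a
neighbor of `v` in `G`; consequently `|N_{G^R}(v) △ P_u|` is `deg_G(v)` if `u` has no
loop and `deg_G(v) + 1` if `u` has a loop. -/
theorem stmt3 {V ι : Type*} [Fintype V] (G : SimpleGraph V) (R : ι → ι → Prop)
    (hR : Symmetric R) (p : V → ι) (u : ι) (v : V) (hv : p v = u) :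
    (∀ w : V, w ≠ v →
      (w ∈ symmDiff ((G.patternApply R p).neighborSet v) (perfectSet R p u) ↔ G.Adj v w)) ∧
    (¬ R u u →
      (symmDiff ((G.patternApply R p).neighborSet v) (perfectSet R p u)).ncard =
        (G.neighborSet v).ncard) ∧
    (R u u →
      (symmDiff ((G.patternApply R p).neighborSet v) (perfectSet R p u)).ncard =
        (G.neighborSet v).ncard + 1) := by
  have hmem := G.mem_symmDiff_neighborSet_perfectSet p hR hv
  refine ⟨fun w hw => by simp [hmem, hw], fun hloop => ?_, fun hloop => ?_⟩
  · congr 1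
    ext w
    simp [hmem, hloop]
  · have hset : symmDiff ((G.patternApply R p).neighborSet v) (perfectSet R p u) =
        insert v (G.neighborSet v) := by
      ext w
      simp [hmem, hloop, or_comm]
    rw [hset, Set.ncard_insert_of_notMem G.notMem_neighborSet_self (Set.toFinite _)]
end

section
/- Let G be a finite simple graph, R a graph possibly with loops on K nodes, (V_u)_{u∈V(R)} a partition of V(G), and (A,B) a partition of V(G) into two sets. For a graph H on vertex set V(G), let M_H denote the A×B matrix over the two-element field GF(2) whose (a,b) entry is 1 if and only if ab is an edge of H. Then the rank of M_{G^R} over GF(2) is at most the rank of M_G over GF(2) plus K. -/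
theorem Matrix.rank_add_le {m n K : Type*} [Fintype n] [Field K] (M N : Matrix m n K) :
    (M + N).rank ≤ M.rank + N.rank := by
  rw [Matrix.rank, Matrix.rank, Matrix.rank, Matrix.mulVecLin_add]
  exact (Submodule.finrank_mono (LinearMap.range_add_le _ _)).trans
    (Submodule.finrank_add_le_finrank_add_finrank _ _)

theorem Matrix.rank_submatrix_le_card_height {m n ι R : Type*} [Fintype n] [Fintype ι]
    [CommSemiring R] [StrongRankCondition R] (Q : Matrix ι n R) (r : m → ι) :
    (Q.submatrix r id).rank ≤ Fintype.card ι :=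
  (Q.rank_submatrix_le r id).trans Q.rank_le_card_height

theorem SimpleGraph.patternApply_adj_iff {V ι : Type*} (G : SimpleGraph V) {R : ι → ι → Prop}
    (hR : Symmetric R) (p : V → ι) {v w : V} (hvw : v ≠ w) :
    (G.patternApply R p).Adj v w ↔ Xor (G.Adj v w) (R (p v) (p w)) := by
  show v ≠ w ∧ Xor' _ _ ↔ _
  rw [or_iff_left_of_imp (@hR (p w) (p v))]
  exact and_iff_right hvw

theorem ZMod.two_eq_add_of_eq_one_iff_xor {P Q : Prop} {x y z : ZMod 2} (hx : x = 1 ↔ P)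
    (hy : y = 1 ↔ Q) (hz : z = 1 ↔ Xor P Q) : z = x + y := by
  rw [← hx, ← hy, xor_iff_not_iff] at hz
  clear hx hy
  revert x y z
  decide

theorem stmt17_general {V ι : Type*} [Fintype ι] (K : ℕ)
    (hK : Fintype.card ι = K)
    (G : SimpleGraph V) (R : ι → ι → Prop) (hR : Symmetric R) (p : V → ι)
    (A B : Finset V) (hdisj : Disjoint A B)
    (M₁ M₂ : Matrix A B (ZMod 2))
    (hM₁ : ∀ (a : A) (b : B), M₁ a b = 1 ↔ G.Adj a.1 b.1)
    (hM₂ : ∀ (a : A) (b : B), M₂ a b = 1 ↔ (G.patternApply R p).Adj a.1 b.1) :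
    M₂.rank ≤ M₁.rank + K := by
  classical
  -- the contribution of `R` depends on the row only through its part, hence has rank `≤ K`
  let Q : Matrix ι B (ZMod 2) := Matrix.of fun u b => if R u (p b) then 1 else 0
  have hsplit : M₂ = M₁ + Q.submatrix (fun a : A => p a) id := by
    ext a b
    have hab : a.1 ≠ b.1 := fun h => Finset.disjoint_left.mp hdisj a.2 (h ▸ b.2)
    refine ZMod.two_eq_add_of_eq_one_iff_xor (hM₁ a b) ?_
      ((hM₂ a b).trans (G.patternApply_adj_iff hR p hab))
    simp [Q]
  calc M₂.rank ≤ M₁.rank + (Q.submatrix (fun a : A => p a) id).rank :=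
        hsplit ▸ Matrix.rank_add_le _ _
    _ ≤ M₁.rank + K := by grw [Q.rank_submatrix_le_card_height, hK]

/-- for a partition `(A,B)` of `V(G)` into two sets and the `A×B`
GF(2) adjacency matrices `M₁` of `G` and `M₂` of `G^R` (an entry is `1` iff the
corresponding pair is an edge; over `GF(2)` every entry is `0` or `1`, so the matrices
are determined by these conditions), the rank of `M₂` over `GF(2)` is at most the rank
of `M₁` over `GF(2)` plus the number `K` of nodes of `R`. -/
theorem stmt17 {V ι : Type*} [Fintype V] [DecidableEq V] [Fintype ι] (K : ℕ)
    (hK : Fintype.card ι = K)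
    (G : SimpleGraph V) (R : ι → ι → Prop) (hR : Symmetric R) (p : V → ι)
    (A B : Finset V) (hunion : A ∪ B = Finset.univ) (hdisj : Disjoint A B)
    (M₁ M₂ : Matrix A B (ZMod 2))
    (hM₁ : ∀ (a : A) (b : B), M₁ a b = 1 ↔ G.Adj a.1 b.1)
    (hM₂ : ∀ (a : A) (b : B), M₂ a b = 1 ↔ (G.patternApply R p).Adj a.1 b.1) :
    M₂.rank ≤ M₁.rank + K :=
  stmt17_general K hK G R hR p A B hdisj M₁ M₂ hM₁ hM₂
end
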